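/- Let B be an n × m real matrix, b ∈ R^n, A = B^T B, and 0 < μ < 2/λ_max(A). The iteration C^{(α+1)} = (I − μA) C^{(α)} + μ B^T b converges as α → ∞ to C^{(∞)} = A⁺ B^T b + (I − A⁺A) C^{(0)}. -/

import Mathlib

/-!
Write `t = Bᵀ b` and `L` for the claimed limit. The Penrose equations give `A L = t`, so `L` is a
fixed point of the iteration and the error `C k - L` is `(1 - μ A) ^ k (C 0 - L)`. The initial
error `Ap (A (C 0) - t)` lies in the range of `A`, because `Ap = A Apᵀ Ap`. By the spectral theorem
`(1 - μ A) ^ k A = U diag ((1 - μ λᵢ) ^ k λᵢ) U*`, and each entry tends to `0`: either `λᵢ = 0`,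
or `0 < μ λᵢ < 2` and `|1 - μ λᵢ| < 1`.
-/

open Matrix Filter Topology

theorem tendsto_one_sub_mul_pow_mul {μ x : ℝ} (hμ : 0 < μ) (hx : 0 ≤ x) (hμx : μ * x < 2) :
    Tendsto (fun k : ℕ => (1 - μ * x) ^ k * x) atTop (𝓝 0) := by
  rcases hx.eq_or_lt with rfl | hx
  · simp
  · have hq : |1 - μ * x| < 1 := abs_sub_lt_iff.mpr ⟨by nlinarith [mul_pos hμ hx], by linarith⟩
    simpa using (tendsto_pow_atTop_nhds_zero_of_abs_lt_one hq).mul_const x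

namespace Matrix

open scoped ComplexOrder

section Spectral

variable {n 𝕜 : Type*} [Fintype n] [DecidableEq n] [RCLike 𝕜] {A : Matrix n n 𝕜}

theorem IsHermitian.eigenvalues_le (hA : A.IsHermitian) {c : ℝ}
    (h : ∀ (l : ℝ) (v : n → 𝕜), v ≠ 0 → A *ᵥ v = l • v → l ≤ c) (i : n) :
    hA.eigenvalues i ≤ c :=
  h _ _ (fun hv => hA.eigenvectorBasis.orthonormal.ne_zero i (WithLp.ofLp_injective 2 hv))
    (hA.mulVec_eigenvectorBasis i)

theorem IsHermitian.tendsto_cfc {ι : Type*} {l : Filter ι} (hA : A.IsHermitian)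
    {f : ι → ℝ → ℝ} {g : ℝ → ℝ}
    (h : ∀ i, Tendsto (fun k => f k (hA.eigenvalues i)) l (𝓝 (g (hA.eigenvalues i)))) :
    Tendsto (fun k => hA.cfc (f k)) l (𝓝 (hA.cfc g)) := by
  simp only [IsHermitian.cfc, Unitary.conjStarAlgAut_apply]
  refine ((continuous_const.matrix_mul continuous_id).matrix_mul continuous_const).tendsto _
    |>.comp <| ((continuous_id (X := n → 𝕜)).matrix_diagonal.tendsto _).comp <|
      tendsto_pi_nhds.mpr fun i => (RCLike.continuous_ofReal.tendsto _).comp (h i)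

theorem IsHermitian.pow_one_sub_smul_mul_eq_cfc (hA : A.IsHermitian) (μ : ℝ) (k : ℕ) :
    (1 - μ • A) ^ k * A = hA.cfc (fun x => (1 - μ * x) ^ k * x) := by
  have hA' : IsSelfAdjoint A := hA
  rw [← hA.cfc_eq, cfc_mul (fun x => (1 - μ * x) ^ k) (fun x => x) A,
    cfc_pow (fun x => 1 - μ * x) k A, cfc_sub (fun _ => 1) (fun x => μ * x) A,
    cfc_const_mul μ (fun x => x) A, cfc_const_one ℝ A, cfc_id' ℝ A]

theorem PosSemidef.tendsto_pow_one_sub_smul_mul (hA : A.PosSemidef) {μ : ℝ} (hμ : 0 < μ)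
    (hμA : ∀ i, μ * hA.1.eigenvalues i < 2) :
    Tendsto (fun k : ℕ => (1 - μ • A) ^ k * A) atTop (𝓝 0) := by
  have hcfc_zero : hA.1.cfc (fun _ => 0) = 0 := by simp [IsHermitian.cfc, Function.comp_def]
  simpa only [hA.1.pow_one_sub_smul_mul_eq_cfc, hcfc_zero] using
    hA.1.tendsto_cfc (f := fun k x => (1 - μ * x) ^ k * x) (g := fun _ => 0)
      fun i => tendsto_one_sub_mul_pow_mul hμ (hA.eigenvalues_nonneg i) (hμA i)

end Spectral

section Iteration

variable {n R : Type*} [Fintype n] [DecidableEq n]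

theorem sub_eq_pow_mulVec_of_iterate [Ring R] {M : Matrix n n R} {c L : n → R} {C : ℕ → n → R}
    (hC : ∀ k, C (k + 1) = M *ᵥ C k + c) (hL : M *ᵥ L + c = L) (k : ℕ) :
    C k - L = (M ^ k) *ᵥ (C 0 - L) := by
  induction k with
  | zero => simp
  | succ k ih =>
    rw [hC, pow_succ', ← mulVec_mulVec, ← ih, mulVec_sub]
    nth_rw 1 [← hL]
    abel

theorem PosSemidef.tendsto_iterate_one_sub_smul [RCLike R] {A : Matrix n n R}
    (hA : A.PosSemidef) {μ : ℝ} (hμ : 0 < μ) (hμA : ∀ i, μ * hA.1.eigenvalues i < 2)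
    {t L w : n → R} {C : ℕ → n → R} (hC : ∀ k, C (k + 1) = (1 - μ • A) *ᵥ C k + μ • t)
    (hL : A *ᵥ L = t) (hC0 : C 0 - L = A *ᵥ w) :
    Tendsto C atTop (𝓝 L) := by
  have hfix : (1 - μ • A) *ᵥ L + μ • t = L := by
    rw [sub_mulVec, one_mulVec, smul_mulVec, hL, sub_add_cancel]
  have hCk : ∀ k, C k = L + ((1 - μ • A) ^ k * A) *ᵥ w := fun k => by
    rw [← mulVec_mulVec, ← hC0, ← sub_eq_pow_mulVec_of_iterate hC hfix, add_sub_cancel]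
  have herr : Tendsto (fun k => ((1 - μ • A) ^ k * A) *ᵥ w) atTop (𝓝 0) := by
    simpa [Function.comp_def] using ((continuous_id.matrix_mulVec continuous_const).tendsto 0).comp
      (hA.tendsto_pow_one_sub_smul_mul hμ hμA)
  rw [funext hCk]
  simpa using tendsto_const_nhds.add herr

end Iteration

section Pseudoinverse

variable {m n R : Type*} [Fintype n] [DecidableEq n]

theorem conjTranspose_mul_self_mul_mul_conjTranspose [Fintype m] [PartialOrder R] [Ring R]
    [StarRing R] [StarOrderedRing R] [NoZeroDivisors R] {B : Matrix m n R} {X : Matrix n n R}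
    (h : Bᴴ * B * X * (Bᴴ * B) = Bᴴ * B) :
    Bᴴ * B * X * Bᴴ = Bᴴ := by
  have hker : (1 - Bᴴ * B * X) * (Bᴴ * B) = 0 := by
    rw [Matrix.sub_mul, Matrix.one_mul, h, sub_self]
  rw [mul_conjTranspose_mul_self_eq_zero, Matrix.sub_mul, Matrix.one_mul, sub_eq_zero] at hker
  exact hker.symm

theorem mulVec_pinv_mulVec_add_eq [Ring R] {A X : Matrix n n R} {t : n → R}
    (h1 : A * X * A = A) (ht : (A * X) *ᵥ t = t) (c : n → R) :
    A *ᵥ (X *ᵥ t + (1 - X * A) *ᵥ c) = t := by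
  rw [mulVec_add, mulVec_mulVec, mulVec_mulVec, Matrix.mul_sub, Matrix.mul_one, ← Matrix.mul_assoc,
    h1, sub_self, zero_mulVec, add_zero, ht]

theorem exists_sub_pinv_mulVec_add_eq_mulVec [Ring R] [StarRing R] {A X : Matrix n n R}
    (hA : Aᴴ = A) (h2 : X * A * X = X) (h4 : (X * A)ᴴ = X * A) (t c : n → R) :
    ∃ w, c - (X *ᵥ t + (1 - X * A) *ᵥ c) = A *ᵥ w := by
  have hX : X = A * (Xᴴ * X) := by rw [← Matrix.mul_assoc, ← hA, ← conjTranspose_mul, h4, h2]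
  refine ⟨Xᴴ *ᵥ (X *ᵥ (A *ᵥ c - t)), ?_⟩
  rw [mulVec_mulVec, mulVec_mulVec, Matrix.mul_assoc, ← hX]
  simp only [mulVec_sub, sub_mulVec, one_mulVec, mulVec_mulVec]
  abel

end Pseudoinverse

end Matrix

open Matrix

theorem ipia_iteration_converges_general
    (n m : ℕ) (B : Matrix (Fin n) (Fin m) ℝ) (b : Fin n → ℝ)
    (A Ap : Matrix (Fin m) (Fin m) ℝ) (hAdef : A = Bᵀ * B)
    (hp1 : A * Ap * A = A) (hp2 : Ap * A * Ap = Ap)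
    (hp4 : (Ap * A)ᵀ = Ap * A)
    (μ lmax : ℝ)
    (hmax : ∀ (l : ℝ) (v : Fin m → ℝ), v ≠ 0 → A.mulVec v = l • v → l ≤ lmax)
    (hμ0 : 0 < μ) (hμ2 : μ < 2 / lmax)
    (C : ℕ → (Fin m → ℝ))
    (hC : ∀ α : ℕ, C (α + 1) = (1 - μ • A).mulVec (C α) + μ • Bᵀ.mulVec b) :
    Filter.Tendsto C Filter.atTop
      (nhds (Ap.mulVec (Bᵀ.mulVec b) + (1 - Ap * A).mulVec (C 0))) := by
  rw [← conjTranspose_eq_transpose_of_trivial] at hAdef hp4 hC ⊢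
  have hA : A.PosSemidef := hAdef ▸ posSemidef_conjTranspose_mul_self B
  have hlmax : 0 < lmax := (div_pos_iff_of_pos_left two_pos).mp (hμ0.trans hμ2)
  have hμA : ∀ i, μ * hA.1.eigenvalues i < 2 := fun i =>
    calc μ * hA.1.eigenvalues i ≤ μ * lmax :=
          mul_le_mul_of_nonneg_left (hA.1.eigenvalues_le hmax i) hμ0.le
      _ < 2 := (lt_div_iff₀ hlmax).mp hμ2
  have hAt : (A * Ap) *ᵥ (Bᴴ *ᵥ b) = Bᴴ *ᵥ b := by
    rw [mulVec_mulVec, hAdef, conjTranspose_mul_self_mul_mul_conjTranspose (hAdef ▸ hp1)]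
  obtain ⟨w, hw⟩ := exists_sub_pinv_mulVec_add_eq_mulVec hA.1.eq hp2 hp4 (Bᴴ *ᵥ b) (C 0)
  exact hA.tendsto_iterate_one_sub_smul hμ0 hμA hC (mulVec_pinv_mulVec_add_eq hp1 hAt (C 0)) hw

/-- Let `A = Bᵀ B`, `0 < μ < 2 / λ_max(A)`, and `Ap` the Moore–Penrose pseudoinverse
of `A`. The iteration `C (α+1) = (I - μ A) (C α) + μ Bᵀ b` converges as `α → ∞` to
`Ap Bᵀ b + (I - Ap A) (C 0)`. -/
theorem ipia_iteration_converges
    (n m : ℕ) (B : Matrix (Fin n) (Fin m) ℝ) (b : Fin n → ℝ)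
    (A Ap : Matrix (Fin m) (Fin m) ℝ) (hAdef : A = Bᵀ * B)
    (hp1 : A * Ap * A = A) (hp2 : Ap * A * Ap = Ap)
    (hp3 : (A * Ap)ᵀ = A * Ap) (hp4 : (Ap * A)ᵀ = Ap * A)
    (μ lmax : ℝ) (hlmax_pos : 0 < lmax)
    (hmax_eig : ∃ v : Fin m → ℝ, v ≠ 0 ∧ A.mulVec v = lmax • v)
    (hmax : ∀ (l : ℝ) (v : Fin m → ℝ), v ≠ 0 → A.mulVec v = l • v → l ≤ lmax)
    (hμ0 : 0 < μ) (hμ2 : μ < 2 / lmax)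
    (C : ℕ → (Fin m → ℝ))
    (hC : ∀ α : ℕ, C (α + 1) = (1 - μ • A).mulVec (C α) + μ • Bᵀ.mulVec b) :
    Filter.Tendsto C Filter.atTop
      (nhds (Ap.mulVec (Bᵀ.mulVec b) + (1 - Ap * A).mulVec (C 0))) :=
  ipia_iteration_converges_general n m B b A Ap hAdef hp1 hp2 hp4 μ lmax hmax hμ0 hμ2 C hC
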